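/- arXiv:math/0507207 — 3 statements merged into one kernel-verified Lean document; each statement's English description precedes it below -/
import Mathlib

section
/- For any sequence (F_n) in Δ and any F ∈ Δ, the sequence (F_n) converges weakly to F if and only if d_L(F_n, F) → 0. -/
/-- The modified Lévy distance between two functions `F G : ℝ → ℝ`:
the infimum of all `h > 0` such that for every `x ∈ (-1/h, 1/h)` the inequalities
`F (x - h) - h ≤ G x ≤ F (x + h) + h` and `G (x - h) - h ≤ F x ≤ G (x + h) + h` hold. -/
noncomputable def dL (F G : ℝ → ℝ) : ℝ :=
  sInf {h : ℝ | 0 < h ∧ ∀ x ∈ Set.Ioo (-h⁻¹) h⁻¹,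
    (F (x - h) - h ≤ G x ∧ G x ≤ F (x + h) + h) ∧
    (G (x - h) - h ≤ F x ∧ F x ≤ G (x + h) + h)}

/-- A distribution function: a nondecreasing, left-continuous function `F : ℝ → [0,1]`
(the extension to `±∞` by `0`, `1` being implicit). `Δ` is the set of all such functions. -/
def IsDistributionFn (F : ℝ → ℝ) : Prop :=
  Monotone F ∧ (∀ x : ℝ, ContinuousWithinAt F (Set.Iio x) x) ∧
    (∀ x : ℝ, 0 ≤ F x) ∧ (∀ x : ℝ, F x ≤ 1)

/-- Weak convergence of a sequence of distribution functions: pointwise convergence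
at every continuity point of the limit. -/
def WeakConv (Fn : ℕ → ℝ → ℝ) (F : ℝ → ℝ) : Prop :=
  ∀ x : ℝ, ContinuousAt F x →
    Filter.Tendsto (fun n => Fn n x) Filter.atTop (nhds (F x))

def levySet (F G : ℝ → ℝ) : Set ℝ :=
  {h : ℝ | 0 < h ∧ ∀ x ∈ Set.Ioo (-h⁻¹) h⁻¹,
    (F (x - h) - h ≤ G x ∧ G x ≤ F (x + h) + h) ∧
    (G (x - h) - h ≤ F x ∧ F x ≤ G (x + h) + h)}

lemma dL_eq (F G : ℝ → ℝ) : dL F G = sInf (levySet F G) := rfl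

lemma levySet_upward {F G : ℝ → ℝ} (hF : Monotone F) (hG : Monotone G)
    {h h' : ℝ} (hh : h ∈ levySet F G) (hle : h ≤ h') : h' ∈ levySet F G := by
  obtain ⟨hpos, hcond⟩ := hh
  have hpos' : 0 < h' := hpos.trans_le hle
  refine ⟨hpos', fun x hx => ?_⟩
  have hinv : h'⁻¹ ≤ h⁻¹ := by gcongr
  have hx' : x ∈ Set.Ioo (-h⁻¹) h⁻¹ :=
    ⟨lt_of_le_of_lt (neg_le_neg hinv) hx.1, hx.2.trans_le hinv⟩
  obtain ⟨⟨h1, h2⟩, ⟨h3, h4⟩⟩ := hcond x hx'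
  have m1 : F (x - h') ≤ F (x - h) := hF (by linarith)
  have m2 : F (x + h) ≤ F (x + h') := hF (by linarith)
  have m3 : G (x - h') ≤ G (x - h) := hG (by linarith)
  have m4 : G (x + h) ≤ G (x + h') := hG (by linarith)
  exact ⟨⟨by linarith, by linarith⟩, ⟨by linarith, by linarith⟩⟩

lemma one_mem_levySet {F G : ℝ → ℝ} (hF0 : ∀ x, 0 ≤ F x) (hF1 : ∀ x, F x ≤ 1)
    (hG0 : ∀ x, 0 ≤ G x) (hG1 : ∀ x, G x ≤ 1) : (1 : ℝ) ∈ levySet F G := by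
  refine ⟨one_pos, fun x _ => ?_⟩
  have := hF0 (x - 1); have := hF1 (x - 1); have := hF0 (x + 1); have := hF1 (x + 1)
  have := hG0 (x - 1); have := hG1 (x - 1); have := hG0 (x + 1); have := hG1 (x + 1)
  have := hF0 x; have := hF1 x; have := hG0 x; have := hG1 x
  exact ⟨⟨by linarith, by linarith⟩, ⟨by linarith, by linarith⟩⟩

lemma levySet_bddBelow (F G : ℝ → ℝ) : BddBelow (levySet F G) :=
  ⟨0, fun _ hb => hb.1.le⟩

lemma dL_nonneg {F G : ℝ → ℝ} (hF0 : ∀ x, 0 ≤ F x) (hF1 : ∀ x, F x ≤ 1)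
    (hG0 : ∀ x, 0 ≤ G x) (hG1 : ∀ x, G x ≤ 1) : 0 ≤ dL F G :=
  le_csInf ⟨1, one_mem_levySet hF0 hF1 hG0 hG1⟩ fun _ hb => hb.1.le

lemma dL_le {F G : ℝ → ℝ} {h : ℝ} (hh : h ∈ levySet F G) : dL F G ≤ h :=
  csInf_le (levySet_bddBelow F G) hh

lemma mem_levySet_of_dL_lt {F G : ℝ → ℝ} (hF : Monotone F) (hG : Monotone G)
    (hF0 : ∀ x, 0 ≤ F x) (hF1 : ∀ x, F x ≤ 1) (hG0 : ∀ x, 0 ≤ G x) (hG1 : ∀ x, G x ≤ 1)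
    {h : ℝ} (hlt : dL F G < h) : h ∈ levySet F G := by
  obtain ⟨h', hh', hlt'⟩ := exists_lt_of_csInf_lt ⟨1, one_mem_levySet hF0 hF1 hG0 hG1⟩ hlt
  exact levySet_upward hF hG hh' hlt'.le

theorem weakConv_iff_dL_tendsto_zero' (Fn : ℕ → ℝ → ℝ) (F : ℝ → ℝ)
    (hFn : ∀ n, IsDistributionFn (Fn n)) (hF : IsDistributionFn F) :
    (∀ x : ℝ, ContinuousAt F x →
      Filter.Tendsto (fun n => Fn n x) Filter.atTop (nhds (F x))) ↔
      Filter.Tendsto (fun n => dL (Fn n) F) Filter.atTop (nhds 0) := by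
  constructor
  · intro hw
    rw [Metric.tendsto_atTop]
    intro ε0 hε0
    set ε : ℝ := min (ε0 / 2) (1 / 2) with hεdef
    have hε : 0 < ε := lt_min (by linarith) (by norm_num)
    have hεle : ε ≤ ε0 / 2 := min_le_left _ _
    set δ : ℝ := ε / 2 with hδdef
    have hδ : 0 < δ := by positivity
    -- dense continuity points
    have hdense : Dense {x : ℝ | ContinuousAt F x} := by
      have := (hF.1.countable_not_continuousAt).dense_compl ℝ
      simpa [Set.compl_setOf] using this
    -- choose continuity points s j ∈ (jδ, (j+1)δ)
    have hchoice : ∀ j : ℤ, ∃ c ∈ {x : ℝ | ContinuousAt F x},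
        c ∈ Set.Ioo ((j : ℝ) * δ) (((j : ℝ) + 1) * δ) := fun j =>
      hdense.exists_between (by nlinarith)
    choose s hsc hsmem using hchoice
    set M : ℤ := ⌈ε⁻¹ / δ⌉ with hM
    set T : Finset ℤ := Finset.Icc (-M - 1) (M + 1) with hT
    have hev : ∀ᶠ n in Filter.atTop, ∀ j ∈ T, |Fn n (s j) - F (s j)| < ε / 2 := by
      rw [Filter.eventually_all_finset]
      intro j _
      have := (hw (s j) (hsc j)).eventually (Metric.ball_mem_nhds (F (s j)) (by positivity : (0:ℝ) < ε / 2))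
      simpa [Real.dist_eq] using this
    obtain ⟨N, hN⟩ := Filter.eventually_atTop.1 hev
    refine ⟨N, fun n hn => ?_⟩
    have hmem : ε ∈ levySet (Fn n) F := by
      refine ⟨hε, fun x hx => ?_⟩
      obtain ⟨hx1, hx2⟩ := hx
      set j : ℤ := ⌊x / δ⌋ with hj
      have hj1 : (j : ℝ) * δ ≤ x := by
        rw [hj]
        have := Int.floor_le (x / δ)
        calc (⌊x / δ⌋ : ℝ) * δ ≤ x / δ * δ := by nlinarith
        _ = x := by field_simp
      have hj2 : x < ((j : ℝ) + 1) * δ := by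
        have := Int.lt_floor_add_one (x / δ)
        have : x / δ < (j : ℝ) + 1 := by exact_mod_cast this
        calc x = x / δ * δ := by field_simp
        _ < ((j : ℝ) + 1) * δ := by nlinarith
      -- j range
      have hMpos : (0:ℝ) < ε⁻¹ / δ := by positivity
      have hMle : ε⁻¹ / δ ≤ (M : ℝ) := Int.le_ceil _
      have hjub : j ≤ M := by
        have : x / δ < ε⁻¹ / δ := by apply div_lt_div_of_pos_right hx2 hδ
        exact Int.le_of_lt_add_one (by
          have : (j : ℝ) < (M : ℝ) + 1 := by
            have h1 : (j : ℝ) ≤ x / δ := Int.floor_le _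
            linarith
          exact_mod_cast this)
      have hjlb : -M ≤ j := by
        have h1 : -(ε⁻¹) / δ < x / δ := by apply div_lt_div_of_pos_right hx1 hδ
        have h2 : -(M : ℝ) ≤ x / δ := by
          have : -(ε⁻¹ / δ) ≥ -(M:ℝ) := by linarith
          have hne : -(ε⁻¹) / δ = -(ε⁻¹ / δ) := by ring
          linarith [hne ▸ h1]
        exact Int.le_floor.2 (by push_cast; exact h2)
      have hjm1 : j - 1 ∈ T := by
        simp only [hT, Finset.mem_Icc]; omega
      have hjp1 : j + 1 ∈ T := by
        simp only [hT, Finset.mem_Icc]; omega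
      have ha := hN n hn (j - 1) hjm1
      have hb := hN n hn (j + 1) hjp1
      set a := s (j - 1) with hadef
      set b := s (j + 1) with hbdef
      have hamem := hsmem (j - 1)
      have hbmem := hsmem (j + 1)
      rw [← hadef] at hamem; rw [← hbdef] at hbmem
      push_cast at hamem hbmem
      have haIoo1 : ((j:ℝ) - 1) * δ < a := hamem.1
      have haIoo2 : a < (j:ℝ) * δ := by have := hamem.2; linarith [this]
      have hbIoo1 : ((j:ℝ) + 1) * δ < b := by have := hbmem.1; linarith [this]
      have hbIoo2 : b < ((j:ℝ) + 2) * δ := by have := hbmem.2; linarith [this]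
      -- bracketing
      have hax : a ≤ x := le_trans haIoo2.le hj1
      have haeps : x - ε ≤ a := by nlinarith
      have hxb : x ≤ b := le_trans hj2.le hbIoo1.le
      have hbeps : b ≤ x + ε := by nlinarith
      have habs_a := abs_sub_lt_iff.1 ha
      have habs_b := abs_sub_lt_iff.1 hb
      have hFm := hF.1
      have hFnm := (hFn n).1
      have e1 : Fn n x ≤ Fn n b := hFnm hxb
      have e2 : Fn n a ≤ Fn n x := hFnm hax
      have e3 : F x ≤ F b := hFm hxb
      have e4 : F a ≤ F x := hFm hax
      have e5 : F b ≤ F (x + ε) := hFm hbeps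
      have e6 : F (x - ε) ≤ F a := hFm haeps
      have e7 : Fn n b ≤ Fn n (x + ε) := hFnm hbeps
      have e8 : Fn n (x - ε) ≤ Fn n a := hFnm haeps
      refine ⟨⟨by linarith [habs_a.1, habs_a.2], by linarith [habs_b.1, habs_b.2]⟩,
        ⟨by linarith [habs_a.1, habs_a.2], by linarith [habs_b.1, habs_b.2]⟩⟩
    have hle : dL (Fn n) F ≤ ε := dL_le hmem
    have hge : 0 ≤ dL (Fn n) F :=
      dL_nonneg (hFn n).2.2.1 (hFn n).2.2.2 hF.2.2.1 hF.2.2.2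
    rw [Real.dist_eq]
    rw [abs_sub_lt_iff]
    constructor <;> linarith
  · intro hd x hcx
    rw [Metric.tendsto_atTop]
    intro ε hε
    obtain ⟨δ0, hδ0, hδ0c⟩ := Metric.continuousAt_iff.1 hcx (ε / 4) (by linarith)
    set h : ℝ := min (δ0 / 2) (min (ε / 4) (1 / (|x| + 1))) with hhdef
    have hh : 0 < h := by
      apply lt_min (by linarith)
      apply lt_min (by linarith)
      positivity
    have hhδ0 : h < δ0 := lt_of_le_of_lt (min_le_left _ _) (by linarith)
    have hhε : h ≤ ε / 4 := le_trans (min_le_right _ _) (min_le_left _ _)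
    have hhx : h ≤ 1 / (|x| + 1) := le_trans (min_le_right _ _) (min_le_right _ _)
    have hxmem : x ∈ Set.Ioo (-h⁻¹) h⁻¹ := by
      have hp : (0:ℝ) < |x| + 1 := by positivity
      have h1 : |x| + 1 ≤ h⁻¹ := by
        rw [inv_eq_one_div, le_div_iff₀ hh]
        have hx1 : 1 / (|x| + 1) * (|x| + 1) = 1 := by field_simp
        nlinarith [mul_le_mul_of_nonneg_right hhx hp.le]
      have h2 : |x| < h⁻¹ := by linarith
      constructor
      · have := neg_abs_le x; have := abs_nonneg x; linarith
      · have := le_abs_self x; linarith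
    rw [Metric.tendsto_atTop] at hd
    obtain ⟨N, hN⟩ := hd h hh
    refine ⟨N, fun n hn => ?_⟩
    have hdn := hN n hn
    rw [Real.dist_eq, sub_zero] at hdn
    have hge : 0 ≤ dL (Fn n) F :=
      dL_nonneg (hFn n).2.2.1 (hFn n).2.2.2 hF.2.2.1 hF.2.2.2
    have hlt : dL (Fn n) F < h := lt_of_abs_lt hdn
    have hmem : h ∈ levySet (Fn n) F :=
      mem_levySet_of_dL_lt (hFn n).1 hF.1 (hFn n).2.2.1 (hFn n).2.2.2
        hF.2.2.1 hF.2.2.2 hlt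
    obtain ⟨⟨_, _⟩, ⟨c3, c4⟩⟩ := hmem.2 x hxmem
    have d1 : |F (x - h) - F x| < ε / 4 := by
      have : dist (x - h) x < δ0 := by
        rw [Real.dist_eq]; rw [abs_sub_lt_iff]; constructor <;> linarith
      have := hδ0c this
      rwa [Real.dist_eq] at this
    have d2 : |F (x + h) - F x| < ε / 4 := by
      have : dist (x + h) x < δ0 := by
        rw [Real.dist_eq]; rw [abs_sub_lt_iff]; constructor <;> linarith
      have := hδ0c this
      rwa [Real.dist_eq] at this
    rw [Real.dist_eq, abs_sub_lt_iff]
    have d1' := abs_sub_lt_iff.1 d1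
    have d2' := abs_sub_lt_iff.1 d2
    constructor <;> linarith [d1'.1, d1'.2, d2'.1, d2'.2, c3, c4]


/-- For any sequence `(F_n)` in `Δ` and any `F ∈ Δ`, `(F_n)` converges weakly to `F`
if and only if `dL (F_n) F → 0`. -/
theorem weakConv_iff_dL_tendsto_zero (Fn : ℕ → ℝ → ℝ) (F : ℝ → ℝ)
    (hFn : ∀ n, IsDistributionFn (Fn n)) (hF : IsDistributionFn F) :
    WeakConv Fn F ↔ Filter.Tendsto (fun n => dL (Fn n) F) Filter.atTop (nhds 0) := by
  exact weakConv_iff_dL_tendsto_zero' Fn F hFn hF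
end

section
/- The metric space (Δ, d_L) is compact, and hence complete. -/
open Set Filter Topology

def InLevyBand (F G : ℝ → ℝ) (h : ℝ) : Prop :=
  ∀ x ∈ Ioo (-h⁻¹) h⁻¹, F (x - h) - h ≤ G x ∧ G x ≤ F (x + h) + h

def IsLevyBound (F G : ℝ → ℝ) (h : ℝ) : Prop :=
  0 < h ∧ InLevyBand F G h ∧ InLevyBand G F h

lemma dL_eq_sInf (F G : ℝ → ℝ) : dL F G = sInf {h | IsLevyBound F G h} := by
  simp only [dL, IsLevyBound, InLevyBand, imp_and, forall_and]

lemma dL_nonneg_s2 (F G : ℝ → ℝ) : 0 ≤ dL F G :=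
  Real.sInf_nonneg fun _ hh => hh.1.le

lemma dL_le_of_isLevyBound {F G : ℝ → ℝ} {h : ℝ} (hh : IsLevyBound F G h) : dL F G ≤ h := by
  rw [dL_eq_sInf]
  exact csInf_le ⟨0, fun _ hh => hh.1.le⟩ hh

lemma InLevyBand.mono {F G : ℝ → ℝ} (hF : Monotone F) {h h' : ℝ} (hpos : 0 < h)
    (hb : InLevyBand F G h) (hle : h ≤ h') : InLevyBand F G h' := by
  intro x hx
  have hinv : h'⁻¹ ≤ h⁻¹ := inv_anti₀ hpos hle
  obtain ⟨lower, upper⟩ := hb x ⟨by linarith [hx.1], by linarith [hx.2]⟩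
  have := hF (show x - h' ≤ x - h by linarith)
  have := hF (show x + h ≤ x + h' by linarith)
  constructor <;> linarith

lemma IsLevyBound.mono {F G : ℝ → ℝ} (hF : Monotone F) (hG : Monotone G) {h h' : ℝ}
    (hb : IsLevyBound F G h) (hle : h ≤ h') : IsLevyBound F G h' :=
  ⟨hb.1.trans_le hle, hb.2.1.mono hF hb.1 hle, hb.2.2.mono hG hb.1 hle⟩

lemma isLevyBound_one {F G : ℝ → ℝ} (hF : IsDistributionFn F) (hG : IsDistributionFn G) :
    IsLevyBound F G 1 := by
  obtain ⟨-, -, hF0, hF1⟩ := hF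
  obtain ⟨-, -, hG0, hG1⟩ := hG
  refine ⟨one_pos, fun x _ => ⟨?_, ?_⟩, fun x _ => ⟨?_, ?_⟩⟩
  · linarith [hF1 (x - 1), hG0 x]
  · linarith [hF0 (x + 1), hG1 x]
  · linarith [hG1 (x - 1), hF0 x]
  · linarith [hG0 (x + 1), hF1 x]

/-- On `Δ` the admissible set is never empty (it contains `1`), so `sInf ∅ = 0` does not bite. -/
lemma isLevyBound_of_dL_lt {F G : ℝ → ℝ} (hF : IsDistributionFn F) (hG : IsDistributionFn G)
    {h : ℝ} (hlt : dL F G < h) : IsLevyBound F G h := by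
  rw [dL_eq_sInf] at hlt
  obtain ⟨h', hh', hh'h⟩ := exists_lt_of_csInf_lt ⟨1, isLevyBound_one hF hG⟩ hlt
  exact hh'.mono hF.1 hG.1 hh'h.le

lemma add_inv_add_le_inv {a b : ℝ} (ha : 0 < a) (hb : 0 < b) (hab : a + b ≤ 1) :
    (a + b)⁻¹ + b ≤ a⁻¹ := by
  rw [inv_eq_one_div, inv_eq_one_div, div_add' _ _ _ (by positivity),
    div_le_div_iff₀ (by positivity) ha]
  nlinarith [mul_pos ha hb]

lemma InLevyBand.trans {F G H : ℝ → ℝ} {a b : ℝ} (ha : 0 < a) (hb : 0 < b) (hab : a + b ≤ 1)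
    (hFG : InLevyBand F G a) (hGH : InLevyBand G H b) : InLevyBand F H (a + b) := by
  intro x ⟨hxl, hxr⟩
  have wa := add_inv_add_le_inv ha hb hab
  have wb := add_inv_add_le_inv hb ha (by linarith)
  rw [add_comm b a] at wb
  obtain ⟨hGH₁, hGH₂⟩ := hGH x ⟨by linarith, by linarith⟩
  have hFG₁ := (hFG (x - b) ⟨by linarith, by linarith⟩).1
  have hFG₂ := (hFG (x + b) ⟨by linarith, by linarith⟩).2
  rw [show x - (a + b) = x - b - a by ring, show x + (a + b) = x + b + a by ring]
  constructor <;> linarith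

lemma IsLevyBound.trans {F G H : ℝ → ℝ} {a b : ℝ} (hFG : IsLevyBound F G a)
    (hGH : IsLevyBound G H b) (hab : a + b ≤ 1) : IsLevyBound F H (a + b) := by
  refine ⟨add_pos hFG.1 hGH.1, hFG.2.1.trans hFG.1 hGH.1 hab hGH.2.1, ?_⟩
  rw [add_comm a b]
  exact hGH.2.2.trans hGH.1 hFG.1 (by linarith) hFG.2.2

lemma tendsto_dL_zero_of_forall_isLevyBound {ι : Type*} {l : Filter ι} {G : ι → ℝ → ℝ}
    {F : ℝ → ℝ} (hb : ∀ h > 0, ∀ᶠ i in l, IsLevyBound (G i) F h) :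
    Tendsto (fun i => dL (G i) F) l (𝓝 0) := by
  refine tendsto_order.2 ⟨fun a ha => .of_forall fun i => ha.trans_le (dL_nonneg_s2 _ _),
    fun a ha => ?_⟩
  filter_upwards [hb (a / 2) (half_pos ha)] with i hi
  exact (dL_le_of_isLevyBound hi).trans_lt (half_lt_self ha)

lemma exists_finset_rat_right_net (a b : ℝ) {h : ℝ} (hh : 0 < h) :
    ∃ Q : Finset ℚ, ∀ y ∈ Icc a b, ∃ q ∈ Q, y < q ∧ (q : ℝ) < y + h := by
  have hcover : Icc a b ⊆ ⋃ q : ℚ, Ioo ((q : ℝ) - h) q := fun y _ => by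
    obtain ⟨q, hyq, hqy⟩ := exists_rat_btwn (lt_add_of_pos_right y hh)
    exact mem_iUnion.2 ⟨q, by linarith, hyq⟩
  obtain ⟨Q, hQ⟩ := isCompact_Icc.elim_finite_subcover _ (fun _ => isOpen_Ioo) hcover
  refine ⟨Q, fun y hy => ?_⟩
  obtain ⟨q, hq, hyq⟩ := mem_iUnion₂.1 (hQ hy)
  exact ⟨q, hq, hyq.2, by linarith [hyq.1]⟩

section RatApprox

variable {G F : ℝ → ℝ} {g : ℚ → ℝ}

/-- Each inequality is tested at a grid point `q` with `x - h < q < x` or `x < q < x + h`,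
using the monotonicity of `G` and the sandwich of `F` by `g`. -/
lemma isLevyBound_of_rat_approx (hG : Monotone G)
    (hgF : ∀ (q : ℚ) (x : ℝ), (q : ℝ) < x → g q ≤ F x)
    (hFg : ∀ (q : ℚ) (x : ℝ), x ≤ q → F x ≤ g q) {h : ℝ} (hh : 0 < h) {Q : Finset ℚ}
    (hQ : ∀ y ∈ Icc (-h⁻¹ - h) h⁻¹, ∃ q ∈ Q, y < q ∧ (q : ℝ) < y + h)
    (hGg : ∀ q ∈ Q, |G q - g q| < h) : IsLevyBound G F h := by
  refine ⟨hh, fun x ⟨hxl, hxr⟩ => ⟨?_, ?_⟩, fun x ⟨hxl, hxr⟩ => ⟨?_, ?_⟩⟩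
  · obtain ⟨q, hq, hxq, hqx⟩ := hQ (x - h) ⟨by linarith, by linarith⟩
    have := (abs_lt.1 (hGg q hq)).2
    linarith [hG hxq.le, hgF q x (by linarith)]
  · obtain ⟨q, hq, hxq, hqx⟩ := hQ x ⟨by linarith, by linarith⟩
    have := (abs_lt.1 (hGg q hq)).1
    linarith [hG hqx.le, hFg q x hxq.le]
  · obtain ⟨q, hq, hxq, hqx⟩ := hQ (x - h) ⟨by linarith, by linarith⟩
    have := (abs_lt.1 (hGg q hq)).1
    linarith [hG (show (q : ℝ) ≤ x by linarith), hFg q (x - h) hxq.le]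
  · obtain ⟨q, hq, hxq, hqx⟩ := hQ x ⟨by linarith, by linarith⟩
    have := (abs_lt.1 (hGg q hq)).2
    linarith [hG hxq.le, hgF q (x + h) hqx]

lemma tendsto_dL_of_tendsto_rat {Gn : ℕ → ℝ → ℝ} (hGn : ∀ n, Monotone (Gn n))
    (hgF : ∀ (q : ℚ) (x : ℝ), (q : ℝ) < x → g q ≤ F x)
    (hFg : ∀ (q : ℚ) (x : ℝ), x ≤ q → F x ≤ g q)
    (hconv : ∀ q : ℚ, Tendsto (fun n => Gn n q) atTop (𝓝 (g q))) :
    Tendsto (fun n => dL (Gn n) F) atTop (𝓝 0) := by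
  refine tendsto_dL_zero_of_forall_isLevyBound fun h hh => ?_
  obtain ⟨Q, hQ⟩ := exists_finset_rat_right_net (-h⁻¹ - h) h⁻¹ hh
  have hclose : ∀ᶠ n in atTop, ∀ q ∈ Q, |Gn n q - g q| < h :=
    (Q.eventually_all).2 fun q _ => (Metric.tendsto_nhds.1 (hconv q) h hh).mono
      fun _ hn => by rwa [Real.dist_eq] at hn
  exact hclose.mono fun n hn => isLevyBound_of_rat_approx (hGn n) hgF hFg hh hQ hn

end RatApprox

lemma exists_subseq_tendsto_pi {α : Type*} [Countable α] {K : Set ℝ} (hK : IsCompact K)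
    (u : ℕ → α → ℝ) (hu : ∀ n a, u n a ∈ K) :
    ∃ g : α → ℝ, (∀ a, g a ∈ K) ∧ ∃ φ : ℕ → ℕ, StrictMono φ ∧
      ∀ a, Tendsto (fun k => u (φ k) a) atTop (𝓝 (g a)) := by
  obtain ⟨g, hg, φ, hφ, hconv⟩ :=
    (isCompact_univ_pi fun _ => hK).tendsto_subseq (x := u) fun n a _ => hu n a
  exact ⟨g, fun a => hg a trivial, φ, hφ, tendsto_pi_nhds.1 hconv⟩

lemma nonempty_image_rat_lt (g : ℚ → ℝ) (x : ℝ) : (g '' {q : ℚ | (q : ℝ) < x}).Nonempty :=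
  let ⟨q, hq⟩ := exists_rat_lt x
  ⟨g q, q, hq, rfl⟩

noncomputable def ratLeftLim (g : ℚ → ℝ) (x : ℝ) : ℝ :=
  sSup (g '' {q : ℚ | (q : ℝ) < x})

section RatLeftLim

variable {g : ℚ → ℝ}

lemma ratLeftLim_le (hg : Monotone g) {q : ℚ} {x : ℝ} (hxq : x ≤ q) : ratLeftLim g x ≤ g q :=
  csSup_le (nonempty_image_rat_lt g x) fun _ ⟨r, hr, hrg⟩ =>
    hrg ▸ hg (by exact_mod_cast (show (r : ℝ) < q from hr.trans_le hxq).le)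

lemma le_ratLeftLim (hg : Monotone g) {q : ℚ} {x : ℝ} (hqx : (q : ℝ) < x) :
    g q ≤ ratLeftLim g x := by
  obtain ⟨r, hxr⟩ := exists_rat_gt x
  refine le_csSup ⟨g r, ?_⟩ ⟨q, hqx, rfl⟩
  rintro _ ⟨p, hp, rfl⟩
  exact hg (by exact_mod_cast (show (p : ℝ) < r from hp.trans hxr).le)

lemma monotone_ratLeftLim (hg : Monotone g) : Monotone (ratLeftLim g) := fun _ _ hxy =>
  csSup_le (nonempty_image_rat_lt g _) fun _ ⟨_, hq, hqg⟩ =>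
    hqg ▸ le_ratLeftLim hg (lt_of_lt_of_le hq hxy)

lemma continuousWithinAt_ratLeftLim (hg : Monotone g) (x : ℝ) :
    ContinuousWithinAt (ratLeftLim g) (Iio x) x := by
  refine tendsto_order.2 ⟨fun a ha => ?_, fun b hb => ?_⟩
  · obtain ⟨_, ⟨q, hq, rfl⟩, haq⟩ := exists_lt_of_lt_csSup (nonempty_image_rat_lt g x) ha
    filter_upwards [Ioo_mem_nhdsLT hq] with y hy
    exact haq.trans_le (le_ratLeftLim hg hy.1)
  · filter_upwards [self_mem_nhdsWithin] with y hy
    exact (monotone_ratLeftLim hg (le_of_lt hy)).trans_lt hb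

lemma isDistributionFn_ratLeftLim (hg : Monotone g) (hg0 : ∀ q, 0 ≤ g q) (hg1 : ∀ q, g q ≤ 1) :
    IsDistributionFn (ratLeftLim g) := by
  refine ⟨monotone_ratLeftLim hg, continuousWithinAt_ratLeftLim hg, fun x => ?_, fun x => ?_⟩
  · obtain ⟨q, hq⟩ := exists_rat_lt x
    exact (hg0 q).trans (le_ratLeftLim hg hq)
  · obtain ⟨q, hq⟩ := exists_rat_gt x
    exact (ratLeftLim_le hg hq.le).trans (hg1 q)

end RatLeftLim

theorem exists_subseq_tendsto_dL {Fn : ℕ → ℝ → ℝ} (hFn : ∀ n, IsDistributionFn (Fn n)) :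
    ∃ F : ℝ → ℝ, IsDistributionFn F ∧ ∃ φ : ℕ → ℕ, StrictMono φ ∧
      Tendsto (fun k => dL (Fn (φ k)) F) atTop (𝓝 0) := by
  obtain ⟨g, hgK, φ, hφ, hconv⟩ := exists_subseq_tendsto_pi isCompact_Icc
    (fun n (q : ℚ) => Fn n q) fun n q => ⟨(hFn n).2.2.1 q, (hFn n).2.2.2 q⟩
  have hg : Monotone g := fun q r hqr => le_of_tendsto_of_tendsto' (hconv q) (hconv r)
    fun k => (hFn (φ k)).1 (by exact_mod_cast hqr)
  refine ⟨ratLeftLim g, isDistributionFn_ratLeftLim hg (fun q => (hgK q).1) (fun q => (hgK q).2),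
    φ, hφ, tendsto_dL_of_tendsto_rat (fun k => (hFn (φ k)).1) (fun _ _ => le_ratLeftLim hg)
      (fun _ _ => ratLeftLim_le hg) hconv⟩

theorem tendsto_dL_of_cauchy_of_subseq {Fn : ℕ → ℝ → ℝ} {F : ℝ → ℝ}
    (hFn : ∀ n, IsDistributionFn (Fn n)) (hF : IsDistributionFn F)
    (hcauchy : ∀ ε : ℝ, 0 < ε → ∃ N : ℕ, ∀ m ≥ N, ∀ n ≥ N, dL (Fn m) (Fn n) < ε)
    {φ : ℕ → ℕ} (hφ : StrictMono φ) (hconv : Tendsto (fun k => dL (Fn (φ k)) F) atTop (𝓝 0)) :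
    Tendsto (fun n => dL (Fn n) F) atTop (𝓝 0) := by
  refine tendsto_dL_zero_of_forall_isLevyBound fun h hh => ?_
  set a := min h 1 / 2
  have ha : 0 < a := by positivity
  have h2a : a + a = min h 1 := add_halves _
  obtain ⟨N, hN⟩ := hcauchy a ha
  obtain ⟨k, hk⟩ := ((hconv.eventually (gt_mem_nhds ha)).and (eventually_ge_atTop N)).exists
  have hsub : IsLevyBound (Fn (φ k)) F a := isLevyBound_of_dL_lt (hFn _) hF hk.1
  filter_upwards [eventually_ge_atTop N] with n hn
  have hn' : IsLevyBound (Fn n) (Fn (φ k)) a :=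
    isLevyBound_of_dL_lt (hFn n) (hFn _) (hN n hn _ (hk.2.trans hφ.le_apply))
  exact (hn'.trans hsub (h2a ▸ min_le_right h 1)).mono (hFn n).1 hF.1
    (h2a ▸ min_le_left h 1)

/-- The metric space `(Δ, dL)` is compact (sequentially, which is equivalent for metric
spaces), and hence complete. -/
theorem delta_compact_and_complete :
    (∀ Fn : ℕ → ℝ → ℝ, (∀ n, IsDistributionFn (Fn n)) →
      ∃ F : ℝ → ℝ, IsDistributionFn F ∧ ∃ φ : ℕ → ℕ, StrictMono φ ∧
        Filter.Tendsto (fun k => dL (Fn (φ k)) F) Filter.atTop (nhds 0)) ∧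
    (∀ Fn : ℕ → ℝ → ℝ, (∀ n, IsDistributionFn (Fn n)) →
      (∀ ε : ℝ, 0 < ε → ∃ N : ℕ, ∀ m ≥ N, ∀ n ≥ N, dL (Fn m) (Fn n) < ε) →
      ∃ F : ℝ → ℝ, IsDistributionFn F ∧
        Filter.Tendsto (fun n => dL (Fn n) F) Filter.atTop (nhds 0)) := by
  refine ⟨fun _ => exists_subseq_tendsto_dL, fun Fn hFn hcauchy => ?_⟩
  obtain ⟨F, hF, φ, hφ, hconv⟩ := exists_subseq_tendsto_dL hFn
  exact ⟨F, hF, tendsto_dL_of_cauchy_of_subseq hFn hF hcauchy hφ hconv⟩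
end

section
/- Let (L, ρ, τ) be a probabilistic metric space with sup-continuous triangle function τ, let A, B be nonempty closed subsets of L and p ∈ L. Then F_{pB} ≥ τ(F_{pA}, F*_{AB}). -/
/-- A distance distribution function: a nondecreasing, left-continuous function
`F : ℝ → [0,1]` with `F x = 0` for all `x ≤ 0`.  `Δ⁺` is the set of all such functions. -/
def IsDDF (F : ℝ → ℝ) : Prop :=
  Monotone F ∧ (∀ x : ℝ, ContinuousWithinAt F (Set.Iio x) x) ∧
    (∀ x : ℝ, F x ≤ 1) ∧ (∀ x : ℝ, x ≤ 0 → F x = 0)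

/-- The distance distribution function `ε₀`. -/
noncomputable def eps0 : ℝ → ℝ := fun x => if x ≤ 0 then 0 else 1

/-- A triangle function `τ` on `Δ⁺`: commutative, associative, nondecreasing in each
argument, continuous (sequentially, with respect to the modified Lévy metric `dL`,
which metrizes the topology of weak convergence), with identity `ε₀`. -/
structure IsTriangleFn (τ : (ℝ → ℝ) → (ℝ → ℝ) → (ℝ → ℝ)) : Prop where
  isDDF : ∀ F G, IsDDF F → IsDDF G → IsDDF (τ F G)
  comm : ∀ F G, IsDDF F → IsDDF G → τ F G = τ G F
  assoc : ∀ F G K, IsDDF F → IsDDF G → IsDDF K → τ (τ F G) K = τ F (τ G K)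
  mono : ∀ F₁ F₂ G₁ G₂, IsDDF F₁ → IsDDF F₂ → IsDDF G₁ → IsDDF G₂ →
    F₁ ≤ F₂ → G₁ ≤ G₂ → τ F₁ G₁ ≤ τ F₂ G₂
  ident : ∀ F, IsDDF F → τ F eps0 = F
  continuous : ∀ (Fn Gn : ℕ → ℝ → ℝ) (F G : ℝ → ℝ),
    (∀ n, IsDDF (Fn n)) → (∀ n, IsDDF (Gn n)) → IsDDF F → IsDDF G →
    Filter.Tendsto (fun n => dL (Fn n) F) Filter.atTop (nhds 0) →
    Filter.Tendsto (fun n => dL (Gn n) G) Filter.atTop (nhds 0) →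
    Filter.Tendsto (fun n => dL (τ (Fn n) (Gn n)) (τ F G)) Filter.atTop (nhds 0)

/-- A probabilistic metric space `(L, ρ, τ)`. -/
structure IsPMSpace {L : Type*} (ρ : L → L → ℝ → ℝ)
    (τ : (ℝ → ℝ) → (ℝ → ℝ) → (ℝ → ℝ)) : Prop where
  isDDF : ∀ p q, IsDDF (ρ p q)
  triangleFn : IsTriangleFn τ
  refl : ∀ p, ρ p p = eps0
  eq_of : ∀ p q, ρ p q = eps0 → p = q
  symm : ∀ p q, ρ p q = ρ q p
  tri_ineq : ∀ p q r, τ (ρ p q) (ρ q r) ≤ ρ p r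

/-- `τ` is sup-continuous: `τ (sup_i F_i) G = sup_i τ (F_i) G` pointwise, for every
(nonempty) family `{F_i} ⊆ Δ⁺` and every `G ∈ Δ⁺`. -/
def SupContinuous (τ : (ℝ → ℝ) → (ℝ → ℝ) → (ℝ → ℝ)) : Prop :=
  ∀ (ι : Type) [Nonempty ι] (Fi : ι → ℝ → ℝ) (G : ℝ → ℝ),
    (∀ i, IsDDF (Fi i)) → IsDDF G →
    ∀ x : ℝ, τ (fun y => ⨆ i, Fi i y) G x = ⨆ i, τ (Fi i) G x

/-- Condition (W): for all `F, G ∈ Δ⁺`, `x > 0` and real `α, β`,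
`F x > α` and `G x > β` imply `τ F G x > max (α + β - 1) 0`. -/
def CondW (τ : (ℝ → ℝ) → (ℝ → ℝ) → (ℝ → ℝ)) : Prop :=
  ∀ F G, IsDDF F → IsDDF G → ∀ x : ℝ, 0 < x → ∀ α β : ℝ,
    α < F x → β < G x → max (α + β - 1) 0 < τ F G x

/-- Convergence of a sequence in the strong topology of the PM space:
for every `t > 0`, eventually `F_{p_n p}(t) > 1 - t`. -/
def SConvSeq {L : Type*} (ρ : L → L → ℝ → ℝ) (pn : ℕ → L) (p : L) : Prop :=
  ∀ t : ℝ, 0 < t → ∃ n₀ : ℕ, ∀ n ≥ n₀, 1 - t < ρ (pn n) p t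

/-- Cauchy sequence in a PM space. -/
def SCauchySeq {L : Type*} (ρ : L → L → ℝ → ℝ) (pn : ℕ → L) : Prop :=
  ∀ t : ℝ, 0 < t → ∃ n₀ : ℕ, ∀ m ≥ n₀, ∀ n ≥ n₀, 1 - t < ρ (pn m) (pn n) t

/-- Completeness of a PM space: every Cauchy sequence converges in the strong topology. -/
def SComplete {L : Type*} (ρ : L → L → ℝ → ℝ) : Prop :=
  ∀ pn : ℕ → L, SCauchySeq ρ pn → ∃ p : L, SConvSeq ρ pn p

/-- The closure of a set in the strong topology of a PM space (the strong topology is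
metrizable, so the closure coincides with the sequential closure). -/
def SClosure {L : Type*} (ρ : L → L → ℝ → ℝ) (A : Set L) : Set L :=
  {q | ∃ pn : ℕ → L, (∀ n, pn n ∈ A) ∧ SConvSeq ρ pn q}

/-- A set closed in the strong topology of a PM space. -/
def SClosed {L : Type*} (ρ : L → L → ℝ → ℝ) (A : Set L) : Prop :=
  SClosure ρ A ⊆ A

/-- The probabilistic distance from a point to a set: `F_{pB}(x) = sup {F_{pq}(x) : q ∈ B}`. -/
noncomputable def probDistToSet {L : Type*} (ρ : L → L → ℝ → ℝ) (p : L) (B : Set L)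
    (x : ℝ) : ℝ :=
  sSup ((fun q => ρ p q x) '' B)

/-- `Γ*_{AB}(x) = inf {F_{pB}(x) : p ∈ A}`. -/
noncomputable def gammaStar {L : Type*} (ρ : L → L → ℝ → ℝ) (A B : Set L) (x : ℝ) : ℝ :=
  sInf ((fun p => probDistToSet ρ p B x) '' A)

/-- `F*_{AB}`, the left-continuous regularization of `Γ*_{AB}`:
`F*_{AB}(x) = sup_{x' < x} Γ*_{AB}(x')`. -/
noncomputable def fStar {L : Type*} (ρ : L → L → ℝ → ℝ) (A B : Set L) (x : ℝ) : ℝ :=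
  sSup (gammaStar ρ A B '' Set.Iio x)

/-- The probabilistic Pompeiu-Hausdorff distance:
`H(A,B)(x) = F_{AB}(x) = min (F*_{AB}(x)) (F*_{BA}(x))`. -/
noncomputable def probHaus {L : Type*} (ρ : L → L → ℝ → ℝ) (A B : Set L) (x : ℝ) : ℝ :=
  min (fStar ρ A B x) (fStar ρ B A x)

/-- Convergence of a sequence of sets with respect to the probabilistic
Pompeiu-Hausdorff metric `H`. -/
def HConv {L : Type*} (ρ : L → L → ℝ → ℝ) (An : ℕ → Set L) (A : Set L) : Prop :=
  ∀ t : ℝ, 0 < t → ∃ n₀ : ℕ, ∀ n ≥ n₀, 1 - t < probHaus ρ (An n) A t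

/-- Cauchy sequence of sets with respect to the probabilistic Pompeiu-Hausdorff metric `H`. -/
def HCauchy {L : Type*} (ρ : L → L → ℝ → ℝ) (An : ℕ → Set L) : Prop :=
  ∀ t : ℝ, 0 < t → ∃ n₀ : ℕ, ∀ m ≥ n₀, ∀ n ≥ n₀, 1 - t < probHaus ρ (An m) (An n) t


/-!
For `a ∈ A` we have `F*_{AB} ≤ Γ*_{AB} ≤ F_{aB}`, hence
`τ(F_{pa}, F*_{AB}) ≤ τ(F_{pa}, F_{aB}) = sup_{b ∈ B} τ(F_{pa}, F_{ab}) ≤ sup_{b ∈ B} F_{pb} = F_{pB}`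
by sup-continuity and the triangle inequality, and taking the supremum over `a ∈ A` (sup-continuity
once more) gives the claim.
-/

open Set Function

lemma IsDDF.nonneg {F : ℝ → ℝ} (hF : IsDDF F) (x : ℝ) : 0 ≤ F x := by
  rcases le_or_gt x 0 with hx | hx
  · exact (hF.2.2.2 x hx).ge
  · exact (hF.2.2.2 0 le_rfl).ge.trans (hF.1 hx.le)

lemma isDDF_iSup {ι : Type*} [Nonempty ι] {F : ι → ℝ → ℝ} (hF : ∀ i, IsDDF (F i)) :
    IsDDF fun x => ⨆ i, F i x := by
  have hbdd : ∀ x, BddAbove (range fun i => F i x) :=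
    fun x => ⟨1, by rintro _ ⟨i, rfl⟩; exact (hF i).2.2.1 x⟩
  have hmono : Monotone fun x => ⨆ i, F i x :=
    fun x y hxy => ciSup_mono (hbdd y) fun i => (hF i).1 hxy
  refine ⟨hmono, fun x => ?_, fun x => ciSup_le fun i => (hF i).2.2.1 x, fun x hx => ?_⟩
  · refine hmono.continuousWithinAt_Iio_iff_leftLim_eq.2
      (le_antisymm (hmono.leftLim_le le_rfl) (ciSup_le fun i => ?_))
    exact le_of_tendsto_of_tendsto' ((hF i).2.1 x) (hmono.tendsto_leftLim x)
      fun y => le_ciSup (hbdd y) i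
  · simp only [(hF _).2.2.2 x hx, ciSup_const]

lemma isDDF_leftLim {g : ℝ → ℝ} (hg : Monotone g) (hg_le_one : ∀ x, g x ≤ 1)
    (hg_nonpos : ∀ x ≤ 0, g x = 0) : IsDDF (leftLim g) := by
  refine ⟨hg.leftLim, fun x => ?_, fun x => (hg.leftLim_le le_rfl).trans (hg_le_one x),
    fun x hx => le_antisymm ?_ ?_⟩
  · exact (continuousWithinAt_leftLim_Iic (hg.tendsto_leftLim x)).mono Iio_subset_Iic_self
  · exact (hg.leftLim_le le_rfl).trans (hg_nonpos x hx).le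
  · exact (hg_nonpos (x - 1) (by linarith)).ge.trans (hg.le_leftLim (sub_one_lt x))

section ProbabilisticDistance

variable {L : Type*} {ρ : L → L → ℝ → ℝ} {A B : Set L}

/-- Indexed by the functions `ρ p q` rather than the points `q`, so that the index type lives in
`Type`, as `SupContinuous` requires. -/
lemma probDistToSet_eq_iSup (p : L) :
    probDistToSet ρ p B = fun x => ⨆ F : ρ p '' B, (F : ℝ → ℝ) x := by
  ext x
  rw [probDistToSet, ← image_image (fun F : ℝ → ℝ => F x), sSup_image']

lemma isDDF_probDistToSet (hρ : ∀ p q, IsDDF (ρ p q)) (p : L) (hB : B.Nonempty) :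
    IsDDF (probDistToSet ρ p B) := by
  have : Nonempty (ρ p '' B) := (hB.image _).to_subtype
  rw [probDistToSet_eq_iSup]
  exact isDDF_iSup fun F => by obtain ⟨_, ⟨q, -, rfl⟩⟩ := F; exact hρ p q

lemma le_probDistToSet (hρ : ∀ p q, IsDDF (ρ p q)) (p : L) {q : L} (hq : q ∈ B) (x : ℝ) :
    ρ p q x ≤ probDistToSet ρ p B x :=
  le_csSup ⟨1, by rintro _ ⟨q, -, rfl⟩; exact (hρ p q).2.2.1 x⟩ ⟨q, hq, rfl⟩

lemma gammaStar_le_probDistToSet (hρ : ∀ p q, IsDDF (ρ p q)) (hB : B.Nonempty) {a : L}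
    (ha : a ∈ A) (x : ℝ) : gammaStar ρ A B x ≤ probDistToSet ρ a B x :=
  csInf_le ⟨0, by rintro _ ⟨b, -, rfl⟩; exact (isDDF_probDistToSet hρ b hB).nonneg x⟩
    ⟨a, ha, rfl⟩

lemma le_gammaStar (hA : A.Nonempty) {c x : ℝ} (h : ∀ a ∈ A, c ≤ probDistToSet ρ a B x) :
    c ≤ gammaStar ρ A B x :=
  le_csInf (hA.image _) (by rintro _ ⟨a, ha, rfl⟩; exact h a ha)

lemma monotone_gammaStar (hρ : ∀ p q, IsDDF (ρ p q)) (hA : A.Nonempty) (hB : B.Nonempty) :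
    Monotone (gammaStar ρ A B) :=
  fun _ _ hxy => le_gammaStar hA fun a ha =>
    (gammaStar_le_probDistToSet hρ hB ha _).trans ((isDDF_probDistToSet hρ a hB).1 hxy)

lemma fStar_eq_leftLim (hρ : ∀ p q, IsDDF (ρ p q)) (hA : A.Nonempty) (hB : B.Nonempty) :
    fStar ρ A B = leftLim (gammaStar ρ A B) :=
  funext fun _ => ((monotone_gammaStar hρ hA hB).leftLim_eq_sSup).symm

lemma isDDF_fStar (hρ : ∀ p q, IsDDF (ρ p q)) (hA : A.Nonempty) (hB : B.Nonempty) :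
    IsDDF (fStar ρ A B) := by
  obtain ⟨a, ha⟩ := hA
  have hγ_le (x : ℝ) := gammaStar_le_probDistToSet hρ hB ha x
  have hFaB := isDDF_probDistToSet hρ a hB
  rw [fStar_eq_leftLim hρ ⟨a, ha⟩ hB]
  refine isDDF_leftLim (monotone_gammaStar hρ ⟨a, ha⟩ hB)
    (fun x => (hγ_le x).trans (hFaB.2.2.1 x)) fun x hx => le_antisymm ?_ ?_
  · exact (hγ_le x).trans (hFaB.2.2.2 x hx).le
  · exact le_gammaStar ⟨a, ha⟩ fun b _ => (isDDF_probDistToSet hρ b hB).nonneg x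

lemma fStar_le_probDistToSet (hρ : ∀ p q, IsDDF (ρ p q)) (hB : B.Nonempty) {a : L}
    (ha : a ∈ A) : fStar ρ A B ≤ probDistToSet ρ a B := by
  rw [fStar_eq_leftLim hρ ⟨a, ha⟩ hB]
  exact fun x => ((monotone_gammaStar hρ ⟨a, ha⟩ hB).leftLim_le le_rfl).trans
    (gammaStar_le_probDistToSet hρ hB ha x)

lemma SupContinuous.apply_probDistToSet_le {τ : (ℝ → ℝ) → (ℝ → ℝ) → (ℝ → ℝ)}
    (hsup : SupContinuous τ) (hρ : ∀ p q, IsDDF (ρ p q)) (p : L) (hB : B.Nonempty)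
    {G : ℝ → ℝ} (hG : IsDDF G) {x c : ℝ} (h : ∀ q ∈ B, τ (ρ p q) G x ≤ c) :
    τ (probDistToSet ρ p B) G x ≤ c := by
  have : Nonempty (ρ p '' B) := (hB.image _).to_subtype
  rw [probDistToSet_eq_iSup,
    hsup _ _ G (fun F => by obtain ⟨_, ⟨q, -, rfl⟩⟩ := F; exact hρ p q) hG]
  exact ciSup_le fun F => by obtain ⟨_, ⟨q, hq, rfl⟩⟩ := F; exact h q hq

end ProbabilisticDistance

theorem probDistToSet_ge_tau_general {L : Type*} (ρ : L → L → ℝ → ℝ)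
    (τ : (ℝ → ℝ) → (ℝ → ℝ) → (ℝ → ℝ)) (hPM : IsPMSpace ρ τ)
    (hsup : SupContinuous τ) (A B : Set L) (hA : A.Nonempty)
    (hB : B.Nonempty) (p : L) :
    τ (probDistToSet ρ p A) (fStar ρ A B) ≤ probDistToSet ρ p B := by
  have hρ := hPM.isDDF
  have hτ := hPM.triangleFn
  have hF := isDDF_fStar hρ hA hB
  intro x
  refine hsup.apply_probDistToSet_le hρ p hA hF fun a ha => ?_
  have hFaB := isDDF_probDistToSet hρ a hB
  calc τ (ρ p a) (fStar ρ A B) x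
      ≤ τ (ρ p a) (probDistToSet ρ a B) x :=
        hτ.mono _ _ _ _ (hρ p a) (hρ p a) hF hFaB le_rfl (fStar_le_probDistToSet hρ hB ha) x
    _ = τ (probDistToSet ρ a B) (ρ p a) x := by rw [hτ.comm _ _ (hρ p a) hFaB]
    _ ≤ probDistToSet ρ p B x := hsup.apply_probDistToSet_le hρ a hB (hρ p a) fun b hb => by
        rw [hτ.comm _ _ (hρ a b) (hρ p a)]
        exact (hPM.tri_ineq p a b x).trans (le_probDistToSet hρ p hb x)

/-- For nonempty closed `A, B ⊆ L` and `p ∈ L`: `F_{pB} ≥ τ (F_{pA}) (F*_{AB})`. -/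
theorem probDistToSet_ge_tau {L : Type*} (ρ : L → L → ℝ → ℝ)
    (τ : (ℝ → ℝ) → (ℝ → ℝ) → (ℝ → ℝ)) (hPM : IsPMSpace ρ τ)
    (hsup : SupContinuous τ) (A B : Set L) (hA : A.Nonempty) (hAcl : SClosed ρ A)
    (hB : B.Nonempty) (hBcl : SClosed ρ B) (p : L) :
    τ (probDistToSet ρ p A) (fStar ρ A B) ≤ probDistToSet ρ p B :=
  probDistToSet_ge_tau_general ρ τ hPM hsup A B hA hB p
end
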